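/- Let $p(\cdot)\in\mathcal{P}(\mathbb{R}^n)\cap LH(\mathbb{R}^n)$, $0<r<1$ with $rp_->1$, and $w\in A_{rp(\cdot)}$. Then for all integers $l\le k$, $\frac{\|\chi_{B_k}\|_{L^{p(\cdot)}(w)}}{\|\chi_{B_l}\|_{L^{p(\cdot)}(w)}} \le C\,2^{(k-l)nr}$, where $B_j=\{|x|\le 2^j\}$, using the identity $\|\chi_E\|_{L^{p(\cdot)}(w)} = \|\chi_E\|_{L^{rp(\cdot)}(w)}^{r}$ for measurable sets $E$, and the estimate $|E|/|B| \le C\|\chi_E\|_{L^{rp(\cdot)}(w)}/\|\chi_B\|_{L^{rp(\cdot)}(w)}$ valid when $M$ is weakly bounded on $L^{rp(\cdot)}(w)$. -/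

import Mathlib

open MeasureTheory Metric Set ENNReal NNReal Filter

noncomputable section

abbrev Rn (n : ℕ) := EuclideanSpace ℝ (Fin n)

/-- The (extended) Hardy--Littlewood maximal operator for `ℝ≥0∞`-valued functions. -/
def HLmaxE {n : ℕ} (f : Rn n → ℝ≥0∞) (x : Rn n) : ℝ≥0∞ :=
  ⨆ (c : Rn n) (r : ℝ) (_ : 0 < r) (_ : x ∈ ball c r),
    (∫⁻ y in ball c r, f y) / volume (ball c r)

/-- The Luxemburg norm of the variable exponent Lebesgue space `L^{p(·)}`. -/
def varNorm {n : ℕ} (p : Rn n → ℝ) (f : Rn n → ℝ≥0∞) : ℝ≥0∞ :=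
  sInf {lam : ℝ≥0∞ | 0 < lam ∧ (∫⁻ x, (f x / lam) ^ p x) ≤ 1}

/-- The norm of the weighted variable exponent Lebesgue space `L^{p(·)}(w)`,
`‖f‖ = ‖f w^{1/p(·)}‖_{L^{p(·)}}`. -/
def wNorm {n : ℕ} (p : Rn n → ℝ) (w : Rn n → ℝ) (f : Rn n → ℝ≥0∞) : ℝ≥0∞ :=
  varNorm p (fun x => f x * ENNReal.ofReal (w x ^ (1 / p x)))

/-- The class `𝒫(ℝⁿ)`: measurable exponents with `1 < p₋ ≤ p₊ < ∞`. -/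
def isPclass {n : ℕ} (p : Rn n → ℝ) : Prop :=
  Measurable p ∧ ∃ pm pp : ℝ, 1 < pm ∧ ∀ x, pm ≤ p x ∧ p x ≤ pp

/-- Global log-Hölder continuity. -/
def isLH {n : ℕ} (p : Rn n → ℝ) : Prop :=
  (∃ C : ℝ, 0 < C ∧ ∀ x y : Rn n, 0 < dist x y → dist x y ≤ 1 / 2 →
      |p x - p y| ≤ C / (-Real.log (dist x y))) ∧
  (∃ C pinf : ℝ, 0 < C ∧ ∀ x : Rn n,
      |p x - pinf| ≤ C / Real.log (Real.exp 1 + ‖x‖))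

/-- The Muckenhoupt class `A_{p(·)}` with variable exponent:
`sup_B |B|⁻¹ ‖w^{1/p(·)} χ_B‖_{L^{p(·)}} ‖w^{-1/p(·)} χ_B‖_{L^{p'(·)}} < ∞`. -/
def isMuckenhoupt {n : ℕ} (p : Rn n → ℝ) (w : Rn n → ℝ) : Prop :=
  (⨆ (c : Rn n) (r : ℝ) (_ : 0 < r),
      varNorm p ((ball c r).indicator (fun x => ENNReal.ofReal (w x ^ (1 / p x)))) *
        varNorm (fun x => p x / (p x - 1))
          ((ball c r).indicator (fun x => ENNReal.ofReal (w x ^ (-(1 / p x)))))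
        / volume (ball c r)) < ∞

/-- The ball `B_k = {|x| ≤ 2^k}`. -/
def Bk {n : ℕ} (k : ℤ) : Set (Rn n) := Metric.closedBall 0 ((2 : ℝ) ^ k)

/-!
Put `q = r p`. Since `(w^{1/q} χ_E)^r = w^{1/p} χ_E`, the Luxemburg norms satisfy
`‖χ_E‖_{L^{p(·)}(w)} = ‖w^{1/q} χ_E‖_{L^{q(·)}}^r`, so it suffices to prove
`‖w^{1/q} χ_{B_k}‖_{q} ≤ C 2^{(k-l)n} ‖w^{1/q} χ_{B_l}‖_{q}`.
For `E ⊆ B`, Hölder's inequality in `L^{q(·)}` (with constant 2) applied to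
`w^{1/q} χ_E · w^{-1/q} χ_E = χ_E` gives
`|E| ≤ 2 ‖w^{1/q} χ_E‖_{q} ‖w^{-1/q} χ_E‖_{q'} ≤ 2 ‖w^{1/q} χ_E‖_{q} ‖w^{-1/q} χ_B‖_{q'}`,
and for a ball `B` the `A_{q(·)}` condition bounds `‖w^{1/q} χ_B‖_{q} ‖w^{-1/q} χ_B‖_{q'}` by
`K |B|`. Hence `‖w^{1/q} χ_B‖_{q} |E| ≤ 2K |B| ‖w^{1/q} χ_E‖_{q}`; take `E = B_l` and for `B`
the ball of radius `2^{k+1}`, whose volume is `2^{(k+1-l)n} |B_l|`.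
-/

lemma ENNReal.le_sInf_mul_sInf_of_ne_zero {a : ℝ≥0∞} {S T : Set ℝ≥0∞} (hS : sInf S ≠ 0)
    (hT : sInf T ≠ 0) (h : ∀ s ∈ S, ∀ t ∈ T, a ≤ s * t) : a ≤ sInf S * sInf T := by
  rcases eq_or_ne (sInf S) ⊤ with hS_top | hS_top
  · simp [hS_top, ENNReal.top_mul hT]
  rcases eq_or_ne (sInf T) ⊤ with hT_top | hT_top
  · simp [hT_top, ENNReal.mul_top hS]
  obtain ⟨s, hs, hs_top⟩ := sInf_lt_iff.mp hS_top.lt_top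
  obtain ⟨t, ht, ht_top⟩ := sInf_lt_iff.mp hT_top.lt_top
  rw [sInf_eq_iInf', sInf_eq_iInf']
  exact ENNReal.le_iInf_mul_iInf ⟨⟨s, hs⟩, hs_top.ne⟩ ⟨⟨t, ht⟩, ht_top.ne⟩
    fun s t => h s s.2 t t.2

lemma ENNReal.mul_le_rpow_add_rpow (a b : ℝ≥0∞) {p q : ℝ} (hpq : p.HolderConjugate q) :
    a * b ≤ a ^ p + b ^ q := by
  refine (ENNReal.young_inequality a b hpq).trans (add_le_add ?_ ?_) <;>
    refine ENNReal.div_le_of_le_mul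
      (le_mul_of_one_le_right zero_le (ENNReal.one_le_ofReal.mpr ?_))
  exacts [hpq.lt.le, hpq.symm.lt.le]

section VarNorm

variable {n : ℕ} {p : Rn n → ℝ} {f g : Rn n → ℝ≥0∞}

lemma varNorm_mono (hp : ∀ x, 0 ≤ p x) (hfg : f ≤ g) : varNorm p f ≤ varNorm p g :=
  sInf_le_sInf fun _ ⟨hlam, hint⟩ => ⟨hlam, (lintegral_mono fun x =>
    ENNReal.rpow_le_rpow (ENNReal.div_le_div_right (hfg x) _) (hp x)).trans hint⟩

lemma lintegral_div_rpow_le_one_of_varNorm_lt (hp : ∀ x, 0 ≤ p x) {lam : ℝ≥0∞}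
    (h : varNorm p f < lam) : ∫⁻ x, (f x / lam) ^ p x ≤ 1 := by
  obtain ⟨mu, ⟨-, hmu⟩, hmu_lt⟩ := sInf_lt_iff.mp h
  exact (lintegral_mono fun x =>
    ENNReal.rpow_le_rpow (ENNReal.div_le_div_left hmu_lt.le _) (hp x)).trans hmu

lemma varNorm_ne_zero (hpm : Measurable p) (hp : ∀ x, 0 < p x) (hf : Measurable f)
    (hf_supp : volume (Function.support f) ≠ 0) : varNorm p f ≠ 0 := by
  intro h0
  set F : ℕ → Rn n → ℝ≥0∞ := fun m x => (f x * m) ^ p x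
  have hF_int : ∀ m, ∫⁻ x, F m x ≤ 1 := fun m => by
    simpa [F, div_eq_mul_inv] using lintegral_div_rpow_le_one_of_varNorm_lt
      (fun x => (hp x).le)
      (h0 ▸ ENNReal.inv_pos.mpr (ENNReal.natCast_ne_top m) : varNorm p f < (m : ℝ≥0∞)⁻¹)
  have hF_lim : ∀ x,
      liminf (fun m => F m x) atTop = (Function.support f).indicator (fun _ => ⊤) x := by
    intro x
    by_cases hx : f x = 0
    · simp [F, hx, ENNReal.zero_rpow_of_pos (hp x)]
    · refine Tendsto.liminf_eq ?_
      rw [indicator_of_mem (Function.mem_support.mpr hx), ← ENNReal.top_rpow_of_pos (hp x),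
        ← ENNReal.mul_top hx]
      exact (ENNReal.continuous_rpow_const.tendsto _).comp
        (ENNReal.Tendsto.const_mul ENNReal.tendsto_nat_nhds_top (Or.inl ENNReal.top_ne_zero))
  have hfatou :
      ∫⁻ x, liminf (fun m => F m x) atTop ≤ liminf (fun m => ∫⁻ x, F m x) atTop :=
    lintegral_liminf_le' fun m => ((hf.mul_const _).pow hpm).aemeasurable
  rw [funext hF_lim, lintegral_indicator_const (measurableSet_support hf),
    ENNReal.top_mul hf_supp] at hfatou
  exact absurd (hfatou.trans (liminf_le_of_frequently_le' (.of_forall hF_int))) (by simp)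

lemma varNorm_rpow {r : ℝ} (hr : 0 < r) :
    varNorm p (fun x => f x ^ r) = varNorm (fun x => r * p x) f ^ r := by
  set e := ENNReal.orderIsoRpow r hr
  have hpre : {lam | 0 < lam ∧ ∫⁻ x, (f x / lam) ^ (r * p x) ≤ 1} =
      e ⁻¹' {lam | 0 < lam ∧ ∫⁻ x, (f x ^ r / lam) ^ p x ≤ 1} := by
    ext mu
    simp only [mem_ofPred_eq, mem_preimage, e, ENNReal.orderIsoRpow_apply,
      ← ENNReal.div_rpow_of_nonneg _ _ hr.le, ← ENNReal.rpow_mul, pos_iff_ne_zero, ne_eq,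
      ENNReal.rpow_eq_zero_iff_of_pos hr]
  show _ = e (sInf _)
  rw [e.map_sInf, ← sInf_image, hpre, e.image_preimage]
  rfl

lemma lintegral_mul_le_two_mul_varNorm_mul_varNorm (hpm : Measurable p) (hp : ∀ x, 1 < p x)
    (hf : Measurable f) (hf0 : varNorm p f ≠ 0)
    (hg0 : varNorm (fun x => p x / (p x - 1)) g ≠ 0) :
    ∫⁻ x, f x * g x ≤ 2 * (varNorm p f * varNorm (fun x => p x / (p x - 1)) g) := by
  rw [mul_comm, ← ENNReal.div_le_iff two_ne_zero ENNReal.ofNat_ne_top]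
  refine ENNReal.le_sInf_mul_sInf_of_ne_zero hf0 hg0 ?_
  rintro lam ⟨hlam0, hlam⟩ mu ⟨hmu0, hmu⟩
  rcases eq_or_ne lam ⊤ with rfl | hlam_top
  · simp [ENNReal.top_mul hmu0.ne']
  rcases eq_or_ne mu ⊤ with rfl | hmu_top
  · simp [ENNReal.mul_top hlam0.ne']
  rw [ENNReal.div_le_iff two_ne_zero ENNReal.ofNat_ne_top]
  have hyoung : ∀ x, f x * g x ≤
      lam * mu * ((f x / lam) ^ p x + (g x / mu) ^ (p x / (p x - 1))) := fun x =>
    calc f x * g x = lam * mu * ((f x / lam) * (g x / mu)) := by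
          rw [mul_mul_mul_comm, ENNReal.mul_div_cancel hlam0.ne' hlam_top,
            ENNReal.mul_div_cancel hmu0.ne' hmu_top]
      _ ≤ _ := by
          gcongr
          exact ENNReal.mul_le_rpow_add_rpow _ _ (Real.HolderConjugate.conjExponent (hp x))
  calc ∫⁻ x, f x * g x
      ≤ ∫⁻ x, lam * mu * ((f x / lam) ^ p x + (g x / mu) ^ (p x / (p x - 1))) :=
        lintegral_mono hyoung
    _ = lam * mu * ((∫⁻ x, (f x / lam) ^ p x) + ∫⁻ x, (g x / mu) ^ (p x / (p x - 1))) := by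
        rw [lintegral_const_mul' _ _ (ENNReal.mul_ne_top hlam_top hmu_top),
          lintegral_add_left ((hf.div_const lam).pow hpm)]
    _ ≤ lam * mu * (1 + 1) := by gcongr
    _ = lam * mu * 2 := by norm_num

end VarNorm

lemma volume_Bk (n : ℕ) (k l : ℤ) :
    volume (Bk (n := n) k) = 2 ^ (((k - l : ℤ) : ℝ) * n) * volume (Bk (n := n) l) := by
  have hk : (2 : ℝ) ^ k = 2 ^ (k - l) * 2 ^ l := by
    rw [← zpow_add₀ two_ne_zero, sub_add_cancel]
  rw [Bk, Bk, hk, Measure.addHaar_closedBall_mul volume _ (by positivity) (by positivity),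
    finrank_euclideanSpace_fin, ← Real.rpow_intCast, ← Real.rpow_natCast,
    ← Real.rpow_mul two_pos.le, ← ENNReal.ofReal_rpow_of_pos two_pos, ENNReal.ofReal_ofNat]

section Weighted

variable {n : ℕ} {q w : Rn n → ℝ}

def weightNorm (q w : Rn n → ℝ) (E : Set (Rn n)) : ℝ≥0∞ :=
  varNorm q (E.indicator fun x => ENNReal.ofReal (w x ^ (1 / q x)))

def dualWeightNorm (q w : Rn n → ℝ) (E : Set (Rn n)) : ℝ≥0∞ :=
  varNorm (fun x => q x / (q x - 1)) (E.indicator fun x => ENNReal.ofReal (w x ^ (-(1 / q x))))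

lemma wNorm_indicator_one_eq_weightNorm_rpow (p : Rn n → ℝ) {r : ℝ} (hr : 0 < r)
    (hw : ∀ x, 0 ≤ w x) (E : Set (Rn n)) :
    wNorm p w (E.indicator fun _ => 1) = weightNorm (fun x => r * p x) w E ^ r := by
  rw [weightNorm, ← varNorm_rpow hr, wNorm]
  congr 1
  ext x
  by_cases hx : x ∈ E
  · rw [indicator_of_mem hx, indicator_of_mem hx, one_mul,
      ENNReal.ofReal_rpow_of_nonneg (Real.rpow_nonneg (hw x) _) hr.le, ← Real.rpow_mul (hw x)]
    field_simp
  · simp [indicator_of_notMem hx, ENNReal.zero_rpow_of_pos hr]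

lemma weightNorm_mono (hq : ∀ x, 0 ≤ q x) {E F : Set (Rn n)} (hEF : E ⊆ F) :
    weightNorm q w E ≤ weightNorm q w F :=
  varNorm_mono hq (indicator_le_indicator_of_subset hEF fun _ => zero_le)

lemma dualWeightNorm_mono (hq : ∀ x, 1 ≤ q x) {E F : Set (Rn n)} (hEF : E ⊆ F) :
    dualWeightNorm q w E ≤ dualWeightNorm q w F :=
  varNorm_mono (fun x => div_nonneg (zero_le_one.trans (hq x)) (sub_nonneg.mpr (hq x)))
    (indicator_le_indicator_of_subset hEF fun _ => zero_le)

lemma volume_le_two_mul_weightNorm_mul_dualWeightNorm (hqm : Measurable q) (hq : ∀ x, 1 < q x)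
    (hwm : Measurable w) (hw : ∀ x, 0 < w x) {E : Set (Rn n)} (hE : MeasurableSet E) :
    volume E ≤ 2 * (weightNorm q w E * dualWeightNorm q w E) := by
  rcases eq_or_ne (volume E) 0 with hE0 | hE0
  · simp [hE0]
  have hsupp : ∀ s : Rn n → ℝ,
      Function.support (E.indicator fun x => ENNReal.ofReal (w x ^ s x)) = E := fun s => by
    ext x
    by_cases hx : x ∈ E <;> simp [hx, Real.rpow_pos_of_pos (hw x)]
  have hmeas : ∀ s : Rn n → ℝ, Measurable s →
      Measurable (E.indicator fun x => ENNReal.ofReal (w x ^ s x)) := fun s hs =>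
    ((hwm.pow hs).ennreal_ofReal).indicator hE
  have hq_pos : ∀ x, 0 < q x := fun x => zero_lt_one.trans (hq x)
  have hqm' : Measurable fun x => q x / (q x - 1) := hqm.div (hqm.sub_const 1)
  have hq'_pos : ∀ x, 0 < q x / (q x - 1) := fun x => div_pos (hq_pos x) (sub_pos.mpr (hq x))
  have hprod : ∀ x, E.indicator (fun x => ENNReal.ofReal (w x ^ (1 / q x))) x *
      E.indicator (fun x => ENNReal.ofReal (w x ^ (-(1 / q x)))) x = E.indicator 1 x := by
    intro x
    by_cases hx : x ∈ E
    · simp only [indicator_of_mem hx, ← ENNReal.ofReal_mul (Real.rpow_nonneg (hw x).le _),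
        ← Real.rpow_add (hw x), add_neg_cancel, Real.rpow_zero, ENNReal.ofReal_one, Pi.one_apply]
    · simp [indicator_of_notMem hx]
  calc volume E = ∫⁻ x, E.indicator 1 x := (lintegral_indicator_one hE).symm
    _ = ∫⁻ x, E.indicator (fun x => ENNReal.ofReal (w x ^ (1 / q x))) x *
          E.indicator (fun x => ENNReal.ofReal (w x ^ (-(1 / q x)))) x := by simp only [hprod]
    _ ≤ _ := lintegral_mul_le_two_mul_varNorm_mul_varNorm hqm hq
        (hmeas _ (measurable_const.div hqm))
        (varNorm_ne_zero hqm hq_pos (hmeas _ (measurable_const.div hqm)) (by rwa [hsupp]))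
        (varNorm_ne_zero hqm' hq'_pos (hmeas _ (measurable_const.div hqm).neg) (by rwa [hsupp]))

lemma weightNorm_mul_volume_le (hqm : Measurable q) (hq : ∀ x, 1 < q x) (hwm : Measurable w)
    (hw : ∀ x, 0 < w x) {E B : Set (Rn n)} (hE : MeasurableSet E) (hEB : E ⊆ B) :
    weightNorm q w B * volume E ≤
      2 * weightNorm q w E * (weightNorm q w B * dualWeightNorm q w B) :=
  calc weightNorm q w B * volume E
      ≤ weightNorm q w B * (2 * (weightNorm q w E * dualWeightNorm q w E)) := by
        gcongr
        exact volume_le_two_mul_weightNorm_mul_dualWeightNorm hqm hq hwm hw hE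
    _ ≤ weightNorm q w B * (2 * (weightNorm q w E * dualWeightNorm q w B)) := by
        gcongr
        exact dualWeightNorm_mono (fun x => (hq x).le) hEB
    _ = 2 * weightNorm q w E * (weightNorm q w B * dualWeightNorm q w B) := by ring

lemma isMuckenhoupt.exists_ball_bound (hA : isMuckenhoupt q w) :
    ∃ K : ℝ, 0 < K ∧ ∀ (c : Rn n) (R : ℝ), 0 < R →
      weightNorm q w (ball c R) * dualWeightNorm q w (ball c R) ≤
        ENNReal.ofReal K * volume (ball c R) := by
  obtain ⟨K, -, hK, -⟩ := ENNReal.lt_iff_exists_real_btwn.mp hA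
  refine ⟨K, ENNReal.ofReal_pos.mp (zero_le.trans_lt hK), fun c R hR => ?_⟩
  rw [← ENNReal.div_le_iff (measure_ball_pos volume c hR).ne' measure_ball_lt_top.ne]
  exact (le_iSup₂_of_le c R (le_iSup (fun _ : 0 < R => weightNorm q w (ball c R) *
    dualWeightNorm q w (ball c R) / volume (ball c R)) hR)).trans hK.le

lemma weightNorm_Bk_le (hqm : Measurable q) (hq : ∀ x, 1 < q x)
    (hwm : Measurable w) (hw : ∀ x, 0 < w x) (hA : isMuckenhoupt q w) :
    ∃ C : ℝ, 0 < C ∧ ∀ k l : ℤ, l ≤ k →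
      weightNorm q w (Bk k) ≤
        ENNReal.ofReal C * 2 ^ (((k - l : ℤ) : ℝ) * n) * weightNorm q w (Bk l) := by
  obtain ⟨K, hK0, hK⟩ := hA.exists_ball_bound
  refine ⟨2 * K * 2 ^ n, by positivity, fun k l hkl => ?_⟩
  -- the `A_q` condition is stated for open balls, so `Bk k` is enlarged to an open ball
  set U : Set (Rn n) := ball 0 (2 ^ (k + 1))
  have hkU : Bk k ⊆ U := closedBall_subset_ball (zpow_lt_zpow_right₀ one_lt_two (lt_add_one k))
  have hlk : Bk (n := n) l ⊆ Bk k :=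
    closedBall_subset_closedBall (zpow_le_zpow_right₀ one_le_two hkl)
  have hU : volume U ≤ 2 ^ n * 2 ^ (((k - l : ℤ) : ℝ) * n) * volume (Bk (n := n) l) :=
    calc volume U ≤ volume (Bk (n := n) (k + 1)) := measure_mono ball_subset_closedBall
      _ = _ := by
        rw [volume_Bk n (k + 1) l, ← ENNReal.rpow_natCast, ← ENNReal.rpow_add _ _ two_ne_zero
          ENNReal.ofNat_ne_top]
        congr 3
        push_cast
        ring
  have hl0 : volume (Bk (n := n) l) ≠ 0 :=
    ((measure_ball_pos volume 0 (zpow_pos two_pos l)).trans_le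
      (measure_mono ball_subset_closedBall)).ne'
  have hl_top : volume (Bk (n := n) l) ≠ ⊤ := measure_closedBall_lt_top.ne
  refine (ENNReal.mul_le_mul_iff_left hl0 hl_top).mp ?_
  calc weightNorm q w (Bk k) * volume (Bk l)
      ≤ weightNorm q w U * volume (Bk l) := by
        gcongr
        exact weightNorm_mono (fun x => (zero_lt_one.trans (hq x)).le) hkU
    _ ≤ 2 * weightNorm q w (Bk l) * (weightNorm q w U * dualWeightNorm q w U) :=
        weightNorm_mul_volume_le hqm hq hwm hw measurableSet_closedBall (hlk.trans hkU)
    _ ≤ 2 * weightNorm q w (Bk l) * (ENNReal.ofReal K * volume U) :=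
        mul_le_mul_right (hK 0 _ (by positivity)) _
    _ ≤ 2 * weightNorm q w (Bk l) *
          (ENNReal.ofReal K * (2 ^ n * 2 ^ (((k - l : ℤ) : ℝ) * n) * volume (Bk l))) := by
        gcongr
    _ = _ := by
        rw [ENNReal.ofReal_mul (by positivity), ENNReal.ofReal_mul zero_le_two,
          ENNReal.ofReal_pow zero_le_two, ENNReal.ofReal_ofNat]
        ring

end Weighted

theorem ball_norm_ratio_estimate_general
    (n : ℕ) (p : Rn n → ℝ) (hP : isPclass p)
    (r : ℝ) (hr0 : 0 < r)
    (hrp : ∃ pm : ℝ, (∀ x, pm ≤ p x) ∧ 1 < r * pm)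
    (w : Rn n → ℝ) (hw : Measurable w) (hwpos : ∀ x, 0 < w x)
    (hA : isMuckenhoupt (fun x => r * p x) w) :
    ∃ C : ℝ, 0 < C ∧ ∀ k l : ℤ, l ≤ k →
      wNorm p w ((Bk k).indicator (fun _ => (1 : ℝ≥0∞))) /
          wNorm p w ((Bk l).indicator (fun _ => (1 : ℝ≥0∞)))
        ≤ ENNReal.ofReal C * (2 : ℝ≥0∞) ^ (((k - l : ℤ) : ℝ) * n * r) := by
  obtain ⟨pm, hp_ge, hrpm⟩ := hrp
  have hq : ∀ x, 1 < r * p x := fun x => hrpm.trans_le (by gcongr; exact hp_ge x)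
  obtain ⟨C, hC, hBk⟩ := weightNorm_Bk_le (measurable_const.mul hP.1) hq hw hwpos hA
  refine ⟨C ^ r, by positivity, fun k l hkl => ?_⟩
  simp only [wNorm_indicator_one_eq_weightNorm_rpow p hr0 (fun x => (hwpos x).le)]
  refine ENNReal.div_le_of_le_mul ?_
  calc _ ≤ (ENNReal.ofReal C * 2 ^ (((k - l : ℤ) : ℝ) * n) *
          weightNorm (fun x => r * p x) w (Bk l)) ^ r := ENNReal.rpow_le_rpow (hBk k l hkl) hr0.le
    _ = _ := by
        rw [ENNReal.mul_rpow_of_nonneg _ _ hr0.le, ENNReal.mul_rpow_of_nonneg _ _ hr0.le,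
          ENNReal.ofReal_rpow_of_nonneg hC.le hr0.le, ← ENNReal.rpow_mul]

theorem ball_norm_ratio_estimate
    (n : ℕ) (hn : 0 < n) (p : Rn n → ℝ) (hP : isPclass p) (hLH : isLH p)
    (r : ℝ) (hr0 : 0 < r) (hr1 : r < 1)
    (hrp : ∃ pm : ℝ, (∀ x, pm ≤ p x) ∧ 1 < r * pm)
    (w : Rn n → ℝ) (hw : Measurable w) (hwpos : ∀ x, 0 < w x)
    (hA : isMuckenhoupt (fun x => r * p x) w) :
    ∃ C : ℝ, 0 < C ∧ ∀ k l : ℤ, l ≤ k →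
      wNorm p w ((Bk k).indicator (fun _ => (1 : ℝ≥0∞))) /
          wNorm p w ((Bk l).indicator (fun _ => (1 : ℝ≥0∞)))
        ≤ ENNReal.ofReal C * (2 : ℝ≥0∞) ^ (((k - l : ℤ) : ℝ) * n * r) :=
  ball_norm_ratio_estimate_general n p hP r hr0 hrp w hw hwpos hA

end
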